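/- Let B ⊆ A × A × A be a basic set of complementary type, i.e., for every (j,k) ∈ A² at least one of (1,j,k) ∈ B or (2,j,k) ∈ B holds. Then the entropy limit exists and h(B) = ln 2, i.e., ln(ln c_n)/n → ln 2 as n → ∞. -/

import Mathlib

open Filter Real

/-- The set of `n`-blocks of the binary Markov tree-shift over the alphabet `Fin 2`
(symbols `0,1` standing for `1,2`) with basic set `B` of 2-blocks `(i,j,k)`:
labelings of the binary words of length `< n` such that every node `v` of length
`≤ n-2`, together with its children `v0` and `v1`, forms a pattern in `B`. -/
def Block2 (B : Finset (Fin 2 × Fin 2 × Fin 2)) (n : ℕ) :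
    Set ({w : List (Fin 2) // w.length < n} → Fin 2) :=
  {u | ∀ (v : List (Fin 2)) (h : v.length + 2 ≤ n),
    (u ⟨v, by omega⟩,
     u ⟨v ++ [0], by simp; omega⟩,
     u ⟨v ++ [1], by simp; omega⟩) ∈ B}

/-- The `n`-blocks whose root is labeled `i`. -/
def BlockRoot2 (B : Finset (Fin 2 × Fin 2 × Fin 2)) (i : Fin 2) (n : ℕ) :
    Set ({w : List (Fin 2) // w.length < n} → Fin 2) :=
  {u | u ∈ Block2 B n ∧ ∀ h : 0 < n, u ⟨[], by simpa using h⟩ = i}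

/-!
A block is free on its leaves: if every pair of children labels `(a, b)` admits a parent
label `i` with `(i, a, b) ∈ B`, any labeling of the `2 ^ n` leaves of depth `n` extends upward
to an `(n + 1)`-block, so `2 ^ 2 ^ n ≤ c_(n+1)`. Conversely a block labels fewer than `2 ^ n`
nodes, so `c_n ≤ 2 ^ 2 ^ n`. Hence `ln (ln c_n) = n ln 2 + O(1)`.
-/

open Topology

/-- The word reversed and prefixed by the digit `1`, read as a binary number. -/
def nodeIndex : List (Fin 2) → ℕ
  | [] => 1
  | b :: w => 2 * nodeIndex w + b

theorem one_le_nodeIndex (w : List (Fin 2)) : 1 ≤ nodeIndex w := by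
  induction w with
  | nil => exact le_rfl
  | cons b w ih => simp only [nodeIndex]; omega

theorem nodeIndex_lt (w : List (Fin 2)) : nodeIndex w < 2 ^ (w.length + 1) := by
  induction w with
  | nil => simp [nodeIndex]
  | cons b w ih =>
    simp only [nodeIndex, List.length_cons, pow_succ]
    omega

theorem nodeIndex_injective : Function.Injective nodeIndex := by
  intro w w' h
  induction w generalizing w' with
  | nil =>
    cases w' with
    | nil => rfl
    | cons b' w' => have := one_le_nodeIndex w'; simp only [nodeIndex] at h; omega
  | cons b w ih =>
    cases w' with
    | nil => have := one_le_nodeIndex w; simp only [nodeIndex] at h; omega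
    | cons b' w' =>
      simp only [nodeIndex] at h
      have hb : b = b' := Fin.ext (by omega)
      rw [hb, ih (w' := w') (by omega)]

theorem card_words_length_lt_le (n : ℕ) :
    Nat.card {w : List (Fin 2) // w.length < n} ≤ 2 ^ n := by
  have hinj : Function.Injective fun w : {w : List (Fin 2) // w.length < n} =>
      (⟨nodeIndex w, (nodeIndex_lt w).trans_le (Nat.pow_le_pow_right two_pos w.2)⟩ :
        Fin (2 ^ n)) :=
    fun w w' h => Subtype.ext (nodeIndex_injective (Fin.mk.inj_iff.mp h))
  simpa using Nat.card_le_card_of_injective _ hinj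

instance (n : ℕ) : Finite {w : List (Fin 2) // w.length < n} :=
  (List.finite_length_lt (Fin 2) n).to_subtype

theorem card_block_le (B : Finset (Fin 2 × Fin 2 × Fin 2)) (n : ℕ) :
    Nat.card (Block2 B n) ≤ 2 ^ 2 ^ n :=
  calc Nat.card (Block2 B n)
      ≤ Nat.card ({w : List (Fin 2) // w.length < n} → Fin 2) :=
        Nat.card_le_card_of_injective _ Subtype.val_injective
    _ = 2 ^ Nat.card {w : List (Fin 2) // w.length < n} := by simp [Nat.card_fun]
    _ ≤ 2 ^ 2 ^ n := Nat.pow_le_pow_right two_pos (card_words_length_lt_le n)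

def extendUp (g : Fin 2 → Fin 2 → Fin 2) (L : List (Fin 2) → Fin 2) :
    ℕ → List (Fin 2) → Fin 2
  | 0, w => L w
  | k + 1, w => g (extendUp g L k (w ++ [0])) (extendUp g L k (w ++ [1]))

theorem two_pow_two_pow_le_card_block {B : Finset (Fin 2 × Fin 2 × Fin 2)}
    (hB : ∀ a b : Fin 2, ∃ i, (i, a, b) ∈ B) (n : ℕ) :
    2 ^ 2 ^ n ≤ Nat.card (Block2 B (n + 1)) := by
  choose g hg using hB
  let extend (L : List.Vector (Fin 2) n → Fin 2) : Block2 B (n + 1) :=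
    ⟨fun w => extendUp g (fun v => if h : v.length = n then L ⟨v, h⟩ else 0)
        (n - w.1.length) w.1,
      fun v hv => by
        obtain ⟨k, hk⟩ : ∃ k, n - v.length = k + 1 := ⟨n - v.length - 1, by omega⟩
        simpa only [List.length_append, List.length_singleton, hk, extendUp,
          show n - (v.length + 1) = k by omega] using hg _ _⟩
  have hinj : Function.Injective extend := by
    intro L L' h
    funext w
    have hleaf := congrFun (congrArg Subtype.val h) ⟨w.1, by simp [w.2]⟩
    simp only [extend, w.2, Nat.sub_self, extendUp] at hleaf
    exact hleaf
  simpa [card_vector] using Nat.card_le_card_of_injective extend hinj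

theorem log_log_two_pow_two_pow (n : ℕ) :
    log (log (2 ^ 2 ^ n)) = n * log 2 + log (log 2) := by
  rw [log_pow, Nat.cast_pow, Nat.cast_ofNat, log_mul (by positivity) (log_pos one_lt_two).ne',
    log_pow]

theorem log_log_mem_Icc {c : ℝ} {m n : ℕ} (hm : 2 ^ 2 ^ m ≤ c) (hn : c ≤ 2 ^ 2 ^ n) :
    m * log 2 + log (log 2) ≤ log (log c) ∧ log (log c) ≤ n * log 2 + log (log 2) := by
  have one_lt_two_pow (k : ℕ) : (1 : ℝ) < 2 ^ 2 ^ k := one_lt_pow₀ one_lt_two (by positivity)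
  rw [← log_log_two_pow_two_pow, ← log_log_two_pow_two_pow]
  have hc : 1 < c := (one_lt_two_pow m).trans_le hm
  exact ⟨log_le_log (log_pos (one_lt_two_pow m)) (log_le_log (by positivity) hm),
    log_le_log (log_pos hc) (log_le_log (by positivity) hn)⟩

theorem tendsto_linear_div_natCast (a b : ℝ) :
    Tendsto (fun n : ℕ => (a * n + b) / n) atTop (𝓝 a) := by
  have h := tendsto_const_nhds (x := a).add (tendsto_const_div_atTop_nhds_zero_nat b)
  rw [add_zero] at h
  refine h.congr' ?_
  filter_upwards [eventually_ne_atTop 0] with n hn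
  field_simp

theorem tendsto_div_natCast_of_linear_bounds {u : ℕ → ℝ} {a b c : ℝ}
    (h : ∀ᶠ n : ℕ in atTop, a * n + b ≤ u n ∧ u n ≤ a * n + c) :
    Tendsto (fun n => u n / n) atTop (𝓝 a) :=
  tendsto_of_tendsto_of_tendsto_of_le_of_le' (tendsto_linear_div_natCast a b)
    (tendsto_linear_div_natCast a c)
    (h.mono fun _ hn => div_le_div_of_nonneg_right hn.1 (Nat.cast_nonneg _))
    (h.mono fun _ hn => div_le_div_of_nonneg_right hn.2 (Nat.cast_nonneg _))

/-- If the basic set `B` is of complementary type (for every pair `(j,k)` at least one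
of `(1,j,k)` or `(2,j,k)` is in `B`), then the entropy limit exists and equals `ln 2`. -/
theorem entropy_eq_log_two_of_complementary (B : Finset (Fin 2 × Fin 2 × Fin 2))
    (hcomp : ∀ jk : Fin 2 × Fin 2, (0, jk.1, jk.2) ∈ B ∨ (1, jk.1, jk.2) ∈ B) :
    Tendsto (fun n : ℕ => Real.log (Real.log (Nat.card (Block2 B n))) / n)
      atTop (nhds (Real.log 2)) := by
  have hB : ∀ a b : Fin 2, ∃ i, (i, a, b) ∈ B := fun a b =>
    (hcomp (a, b)).elim (⟨0, ·⟩) (⟨1, ·⟩)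
  refine tendsto_div_natCast_of_linear_bounds
    (b := log (log 2) - log 2) (c := log (log 2)) ?_
  filter_upwards [eventually_ge_atTop 1] with n hn
  obtain ⟨m, rfl⟩ : ∃ m, n = m + 1 := ⟨n - 1, by omega⟩
  have hlower : (2 : ℝ) ^ 2 ^ m ≤ Nat.card (Block2 B (m + 1)) := by
    exact_mod_cast two_pow_two_pow_le_card_block hB m
  have hupper : (Nat.card (Block2 B (m + 1)) : ℝ) ≤ 2 ^ 2 ^ (m + 1) := by
    exact_mod_cast card_block_le B (m + 1)
  obtain ⟨h₁, h₂⟩ := log_log_mem_Icc hlower hupper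
  push_cast at h₂ ⊢
  constructor <;> linarith
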